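/- arXiv:1301.0391 — 2 statements merged into one kernel-verified Lean document; each statement's English description precedes it below -/
import Mathlib

section
/- In any Moufang loop L, the operation C(x,y,z) = (y * x⁻¹) * z satisfies the ternary distributivity C(C(a,b,c), c, d) = C(C(a, b, C(b,c,d)), C(b,c,d), d) for all a, b, c, d ∈ L. -/
/-- A Moufang loop: a quasigroup with identity satisfying the Moufang identity
`z * (x * (z * y)) = ((z * x) * z) * y`. -/
structure MoufangLoop (α : Type*) where
  mul : α → α → α
  one : α
  ldiv : α → α → α
  rdiv : α → α → α
  one_mul : ∀ a, mul one a = a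
  mul_one : ∀ a, mul a one = a
  ldiv_mul : ∀ a b, ldiv a (mul a b) = b
  mul_ldiv : ∀ a b, mul a (ldiv a b) = b
  mul_rdiv : ∀ a b, mul (rdiv a b) b = a
  rdiv_mul : ∀ a b, rdiv (mul a b) b = a
  moufang : ∀ x y z, mul z (mul x (mul z y)) = mul (mul (mul z x) z) y

/-- The (two-sided) inverse in a Moufang loop: `a⁻¹ = a \ 1`. -/
def MoufangLoop.inv {α : Type*} (L : MoufangLoop α) (a : α) : α := L.ldiv a L.one

/-- The ternary operation `C(x,y,z) = (y * x⁻¹) * z`. -/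
def MoufangLoop.C {α : Type*} (L : MoufangLoop α) (x y z : α) : α :=
  L.mul (L.mul y (L.inv x)) z

namespace MoufangLoop

variable {α : Type*} (L : MoufangLoop α)

/-- The left inverse `1 / a`. -/
def linv (a : α) : α := L.rdiv L.one a

lemma mul_inv (a : α) : L.mul a (L.inv a) = L.one := L.mul_ldiv a L.one

lemma linv_mul (a : α) : L.mul (L.linv a) a = L.one := L.mul_rdiv L.one a

/-- Flexibility: `z (x z) = (z x) z`. -/
lemma flex (x z : α) : L.mul z (L.mul x z) = L.mul (L.mul z x) z := by
  have h := L.moufang x L.one z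
  rwa [L.mul_one, L.mul_one] at h

/-- Left Bol: `z (x (z y)) = (z (x z)) y`. -/
lemma lbol (x y z : α) : L.mul z (L.mul x (L.mul z y)) = L.mul (L.mul z (L.mul x z)) y := by
  rw [L.flex, L.moufang]

/-- Left inverse property for `linv`. -/
lemma linv_mul_mul (z y : α) : L.mul (L.linv z) (L.mul z y) = y := by
  have h := L.lbol (L.linv z) y z
  rw [L.linv_mul, L.mul_one] at h
  have := L.ldiv_mul z (L.mul (L.linv z) (L.mul z y))
  rw [h, L.ldiv_mul] at this
  exact this.symm

/-- The left and right inverses coincide. -/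
lemma linv_eq_inv (a : α) : L.linv a = L.inv a := by
  have h := L.linv_mul_mul a (L.inv a)
  rwa [L.mul_inv, L.mul_one] at h

lemma inv_mul (a : α) : L.mul (L.inv a) a = L.one := by
  rw [← L.linv_eq_inv]; exact L.linv_mul a

/-- Left inverse property. -/
lemma lip (z y : α) : L.mul (L.inv z) (L.mul z y) = y := by
  rw [← L.linv_eq_inv]; exact L.linv_mul_mul z y

lemma inv_inv (a : α) : L.inv (L.inv a) = a := by
  rw [← L.linv_eq_inv]
  have : L.rdiv (L.mul a (L.inv a)) (L.inv a) = a := L.rdiv_mul a (L.inv a)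
  rwa [L.mul_inv] at this

/-- Left inverse property, other form: `a (a⁻¹ b) = b`. -/
lemma lip' (a b : α) : L.mul a (L.mul (L.inv a) b) = b := by
  have h := L.lip (L.inv a) b
  rwa [L.inv_inv] at h

/-- Auxiliary Moufang form: `(x z) y = z ((z⁻¹ x)(z y))`. -/
lemma aux (x y z : α) :
    L.mul (L.mul x z) y = L.mul z (L.mul (L.mul (L.inv z) x) (L.mul z y)) := by
  have h := L.moufang (L.mul (L.inv z) x) y z
  rw [L.lip'] at h
  exact h.symm

/-- Right inverse property: `(x y) y⁻¹ = x`. -/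
lemma rip (x y : α) : L.mul (L.mul x y) (L.inv y) = x := by
  have h := L.aux x (L.inv y) y
  rw [L.mul_inv, L.mul_one] at h
  rw [h, L.lip']

/-- Key lemma: `(v u) (u⁻¹ v⁻¹) = 1`. -/
lemma mul_mul_inv_inv (v u : α) :
    L.mul (L.mul v u) (L.mul (L.inv u) (L.inv v)) = L.one := by
  have h := L.aux v (L.mul (L.inv u) (L.inv v)) u
  rw [L.lip'] at h
  rw [h]
  have h2 : L.mul (L.mul (L.inv u) v) (L.inv v) = L.inv u := L.rip (L.inv u) v
  rw [h2, L.mul_inv]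

/-- Antiautomorphism: `(v u)⁻¹ = u⁻¹ v⁻¹`. -/
lemma inv_mul_rev (v u : α) :
    L.inv (L.mul v u) = L.mul (L.inv u) (L.inv v) := by
  have h := L.ldiv_mul (L.mul v u) (L.mul (L.inv u) (L.inv v))
  rw [L.mul_mul_inv_inv] at h
  exact h

/-- The crucial computation: `u (v u)⁻¹ = v⁻¹`. -/
lemma mul_inv_mul (v u : α) : L.mul u (L.inv (L.mul v u)) = L.inv v := by
  rw [L.inv_mul_rev, L.lip']

end MoufangLoop

theorem moufang_C_distrib1 {α : Type*} (L : MoufangLoop α) (a b c d : α) :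
    L.C (L.C a b c) c d = L.C (L.C a b (L.C b c d)) (L.C b c d) d := by
  unfold MoufangLoop.C
  rw [L.mul_inv_mul, L.mul_inv_mul]
end

section
/- In any extra loop L, the operation C(x,y,z) = (x * y⁻¹) * z satisfies the three invertibility identities C(b, C(a,c,b), a) = c, C(b, a, C(a,b,c)) = c, and C(C(c,a,b), b, a) = c for all a, b, c ∈ L. -/
/-- An extra loop: a quasigroup with identity satisfying the extra loop identity
`(x * (y * z)) * y = (x * y) * (z * y)`. -/
structure ExtraLoop (α : Type*) where
  mul : α → α → α
  one : α
  ldiv : α → α → α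
  rdiv : α → α → α
  one_mul : ∀ a, mul one a = a
  mul_one : ∀ a, mul a one = a
  ldiv_mul : ∀ a b, ldiv a (mul a b) = b
  mul_ldiv : ∀ a b, mul a (ldiv a b) = b
  mul_rdiv : ∀ a b, mul (rdiv a b) b = a
  rdiv_mul : ∀ a b, rdiv (mul a b) b = a
  extra : ∀ x y z, mul (mul x (mul y z)) y = mul (mul x y) (mul z y)

/-- The (two-sided) inverse in an extra loop: `a⁻¹ = a \ 1`. -/
def ExtraLoop.inv {α : Type*} (L : ExtraLoop α) (a : α) : α := L.ldiv a L.one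

/-- The ternary operation `C(x,y,z) = (x * y⁻¹) * z`. -/
def ExtraLoop.C {α : Type*} (L : ExtraLoop α) (x y z : α) : α :=
  L.mul (L.mul x (L.inv y)) z

namespace ExtraLoop

variable {α : Type*} (L : ExtraLoop α)

lemma mul_inv (a : α) : L.mul a (L.inv a) = L.one := L.mul_ldiv a L.one

lemma mul_left_cancel {a x y : α} (h : L.mul a x = L.mul a y) : x = y := by
  have := congrArg (L.ldiv a) h
  rwa [L.ldiv_mul, L.ldiv_mul] at this

lemma mul_right_cancel {a x y : α} (h : L.mul x a = L.mul y a) : x = y := by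
  have := congrArg (fun t => L.rdiv t a) h
  simpa [L.rdiv_mul] using this

/-- left inverse: `a⁻¹ * a = 1`. -/
lemma inv_mul (a : α) : L.mul (L.inv a) a = L.one := by
  have h := L.extra a a (L.inv a)
  rw [L.mul_inv, L.mul_one] at h
  -- h : (a * a) * a = (a * a) * (a⁻¹ * a)
  have := L.mul_left_cancel (a := L.mul a a)
      (by rw [← h, L.mul_one] : L.mul (L.mul a a) L.one = L.mul (L.mul a a) (L.mul (L.inv a) a))
  exact this.symm

lemma inv_inv (a : α) : L.inv (L.inv a) = a := by
  apply L.mul_left_cancel (a := L.inv a)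
  rw [L.mul_inv, L.inv_mul]

/-- left inverse property: `a⁻¹ * (a * b) = b`. -/
lemma lip (a b : α) : L.mul (L.inv a) (L.mul a b) = b := by
  have h := L.extra (L.inv a) a b
  rw [L.inv_mul, L.one_mul] at h
  -- h : (a⁻¹ * (a * b)) * a = b * a
  exact L.mul_right_cancel h

lemma lip' (a b : α) : L.mul a (L.mul (L.inv a) b) = b := by
  have := L.lip (L.inv a) b
  rwa [L.inv_inv] at this

/-- antiautomorphic inverse property. -/
lemma aaip (a b : α) : L.inv (L.mul a b) = L.mul (L.inv b) (L.inv a) := by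
  have h := L.extra (L.inv b) (L.inv a) (L.mul a b)
  rw [L.lip, L.inv_mul, L.one_mul] at h
  have h2 : L.mul (L.inv (L.mul a b)) (L.mul (L.mul a b) (L.inv a)) = L.inv a :=
    L.lip (L.mul a b) (L.inv a)
  exact L.mul_right_cancel (a := L.mul (L.mul a b) (L.inv a)) (h2.trans h)

lemma inv_injective {x y : α} (h : L.inv x = L.inv y) : x = y := by
  have := congrArg L.inv h
  rwa [L.inv_inv, L.inv_inv] at this

/-- right inverse property: `(a * b) * b⁻¹ = a`. -/
lemma rip (a b : α) : L.mul (L.mul a b) (L.inv b) = a := by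
  apply L.inv_injective
  rw [L.aaip, L.aaip, L.inv_inv, L.lip']

lemma rip' (a b : α) : L.mul (L.mul a (L.inv b)) b = a := by
  have := L.rip a (L.inv b)
  rwa [L.inv_inv] at this

end ExtraLoop

theorem extra_C_invertibility {α : Type*} (L : ExtraLoop α) (a b c : α) :
    L.C b (L.C a c b) a = c ∧ L.C b a (L.C a b c) = c ∧
    L.C (L.C c a b) b a = c := by
  refine ⟨?_, ?_, ?_⟩
  · show L.mul (L.mul b (L.inv (L.mul (L.mul a (L.inv c)) b))) a = c
    rw [L.aaip, L.aaip, L.inv_inv, L.lip', L.rip']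
  · show L.mul (L.mul b (L.inv a)) (L.mul (L.mul a (L.inv b)) c) = c
    have hb : L.mul b (L.inv a) = L.inv (L.mul a (L.inv b)) := by
      rw [L.aaip, L.inv_inv]
    rw [hb, L.lip]
  · show L.mul (L.mul (L.mul (L.mul c (L.inv a)) b) (L.inv b)) a = c
    rw [L.rip, L.rip']
end
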